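/- Let G = (V, E, c) be a labeled directed graph and let ab be a directed edge of G whose label c(a,b) occurs on no other edge of G. Let G' be the graph obtained from G by reversing the direction of the edge ab (keeping its label). Then Lie(G) and Lie(G') are isomorphic Lie algebras. -/

import Mathlib

/-- A finite simple directed graph with edge labels: `lab x y = some l` means there is a
directed edge from `x` to `y` carrying label `l`. Simplicity: no loops, and at most one
of the two directions between a pair of vertices carries an edge. -/
structure LabeledDigraph (V C : Type*) where
  lab : V → V → Option C
  no_loops : ∀ v, lab v v = none
  one_dir : ∀ x y, (lab x y).isSome → lab y x = none

/-- Adjacency in the underlying undirected graph. -/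
def LabeledDigraph.adj {V C : Type*} (G : LabeledDigraph V C) (x y : V) : Prop :=
  (G.lab x y).isSome ∨ (G.lab y x).isSome

/-- A Lie algebra `L` over `F` together with a basis `b` indexed by the vertices and the
labels realizes `Lie(G)` if the bracket of two vertices joined by an edge is the label of
that edge (with a sign given by the orientation, which follows from antisymmetry), the
bracket of non-adjacent vertices is zero, and all labels are central. -/
def IsGraphLieAlg {V C F L : Type*} [Field F] [LieRing L] [LieAlgebra F L]
    (G : LabeledDigraph V C) (b : Module.Basis (V ⊕ C) F L) : Prop :=
  (∀ (x y : V) (l : C), G.lab x y = some l →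
      ⁅b (Sum.inl x), b (Sum.inl y)⁆ = b (Sum.inr l)) ∧
  (∀ x y : V, G.lab x y = none → G.lab y x = none →
      ⁅b (Sum.inl x), b (Sum.inl y)⁆ = 0) ∧
  (∀ (l : C) (z : L), ⁅b (Sum.inr l), z⁆ = 0)

/-! The isomorphism fixes every vertex and every label except `l₀`, which it sends to `-l₀`.
Since `l₀` labels only the edge `a → v`, the only structure constant that changes is
`⁅a, v⁆ = l₀`, which becomes `⁅a, v⁆ = -l₀`, i.e. `⁅v, a⁆ = l₀`: the relation of the reversed
graph. -/

open Module

section LieBasis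

variable {R ι L L' : Type*} [CommRing R] [LieRing L] [LieAlgebra R L] [LieRing L'] [LieAlgebra R L']

theorem LinearMap.map_lie_of_basis (f : L →ₗ[R] L') (b : Basis ι R L)
    (h : ∀ i j, f ⁅b i, b j⁆ = ⁅f (b i), f (b j)⁆) (x y : L) : f ⁅x, y⁆ = ⁅f x, f y⁆ := by
  have hB : (LieModule.toEnd R L L : L →ₗ[R] L →ₗ[R] L).compr₂ f =
      (LieModule.toEnd R L' L' : L' →ₗ[R] L' →ₗ[R] L').compl₁₂ f f :=
    LinearMap.ext_basis b b h
  exact LinearMap.congr_fun₂ hB x y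

def LinearEquiv.toLieEquiv (e : L ≃ₗ[R] L') (h : ∀ x y, e ⁅x, y⁆ = ⁅e x, e y⁆) :
    L ≃ₗ⁅R⁆ L' :=
  { e with map_lie' := h _ _ }

end LieBasis

namespace IsGraphLieAlg

variable {V C F L : Type*} [Field F] [LieRing L] [LieAlgebra F L]
  {G : LabeledDigraph V C} {b : Basis (V ⊕ C) F L}

theorem lie_inl_inl_of_lab_swap (hb : IsGraphLieAlg G b) {x y : V} {l : C}
    (h : G.lab y x = some l) : ⁅b (.inl x), b (.inl y)⁆ = -b (.inr l) := by
  rw [← lie_skew, hb.1 y x l h]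

theorem lie_inr_left (hb : IsGraphLieAlg G b) (l : C) (z : L) : ⁅b (.inr l), z⁆ = 0 :=
  hb.2.2 l z

theorem lie_inr_right (hb : IsGraphLieAlg G b) (l : C) (z : L) : ⁅z, b (.inr l)⁆ = 0 := by
  rw [← lie_skew, hb.lie_inr_left, neg_zero]

theorem map_lie_inl_inl_of_lab_eq {L' : Type*} [LieRing L'] [LieAlgebra F L']
    {G' : LabeledDigraph V C} {b' : Basis (V ⊕ C) F L'}
    (hb : IsGraphLieAlg G b) (hb' : IsGraphLieAlg G' b') (f : L →ₗ[F] L') {x y : V}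
    (hxy : G'.lab x y = G.lab x y) (hyx : G'.lab y x = G.lab y x)
    (hf : ∀ l, G.lab x y = some l ∨ G.lab y x = some l → f (b (.inr l)) = b' (.inr l)) :
    f ⁅b (.inl x), b (.inl y)⁆ = ⁅b' (.inl x), b' (.inl y)⁆ := by
  rcases hl : G.lab x y with _ | l
  · rcases hl' : G.lab y x with _ | l
    · rw [hb.2.1 x y hl hl', hb'.2.1 x y (hxy.trans hl) (hyx.trans hl'), map_zero]
    · rw [hb.lie_inl_inl_of_lab_swap hl', hb'.lie_inl_inl_of_lab_swap (hyx.trans hl'), map_neg,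
        hf l (.inr hl')]
  · rw [hb.1 x y l hl, hb'.1 x y l (hxy.trans hl), hf l (.inl hl)]

end IsGraphLieAlg

structure LabeledDigraph.IsUniqueEdgeReversal {V C : Type*} (G' G : LabeledDigraph V C) (a v : V)
    (l₀ : C) : Prop where
  lab_edge : G.lab a v = some l₀
  eq_of_lab_eq : ∀ x y : V, G.lab x y = some l₀ → x = a ∧ y = v
  lab_reverse : G'.lab v a = some l₀
  lab_eq : ∀ x y : V, ¬(x = a ∧ y = v) → ¬(x = v ∧ y = a) → G'.lab x y = G.lab x y

section EdgeReversal

variable {V C F L L' : Type*} [Field F] [LieRing L] [LieAlgebra F L] [LieRing L'] [LieAlgebra F L']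
  [DecidableEq C]

def reversalSign (l₀ : C) : V ⊕ C → Fˣ := Sum.elim 1 fun l => if l = l₀ then -1 else 1

noncomputable def edgeReversalEquiv (b : Basis (V ⊕ C) F L) (b' : Basis (V ⊕ C) F L') (l₀ : C) :
    L ≃ₗ[F] L' :=
  b.equiv (b'.unitsSMul (reversalSign l₀)) (Equiv.refl _)

variable (b : Basis (V ⊕ C) F L) (b' : Basis (V ⊕ C) F L') (l₀ : C)

theorem edgeReversalEquiv_apply_basis (i : V ⊕ C) :
    edgeReversalEquiv b b' l₀ (b i) = (reversalSign l₀ i : Fˣ) • b' i := by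
  simp [edgeReversalEquiv, Basis.equiv_apply, Basis.unitsSMul_apply]

theorem edgeReversalEquiv_inl (x : V) :
    edgeReversalEquiv b b' l₀ (b (.inl x)) = b' (.inl x) := by
  simp [edgeReversalEquiv_apply_basis, reversalSign]

theorem edgeReversalEquiv_inr_of_ne {l : C} (hl : l ≠ l₀) :
    edgeReversalEquiv b b' l₀ (b (.inr l)) = b' (.inr l) := by
  simp [edgeReversalEquiv_apply_basis, reversalSign, hl]

theorem edgeReversalEquiv_inr_self :
    edgeReversalEquiv b b' l₀ (b (.inr l₀)) = -b' (.inr l₀) := by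
  simp [edgeReversalEquiv_apply_basis, reversalSign]

variable {G G' : LabeledDigraph V C} {a v : V}

theorem edgeReversalEquiv_lie_inl_inl (hG : G'.IsUniqueEdgeReversal G a v l₀)
    (hb : IsGraphLieAlg G b) (hb' : IsGraphLieAlg G' b') (x y : V) :
    edgeReversalEquiv b b' l₀ ⁅b (.inl x), b (.inl y)⁆ = ⁅b' (.inl x), b' (.inl y)⁆ := by
  by_cases hav : x = a ∧ y = v
  · obtain ⟨rfl, rfl⟩ := hav
    rw [hb.1 x y l₀ hG.lab_edge, edgeReversalEquiv_inr_self,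
      hb'.lie_inl_inl_of_lab_swap hG.lab_reverse]
  by_cases hva : x = v ∧ y = a
  · obtain ⟨rfl, rfl⟩ := hva
    rw [hb.lie_inl_inl_of_lab_swap hG.lab_edge, map_neg, edgeReversalEquiv_inr_self, neg_neg,
      hb'.1 x y l₀ hG.lab_reverse]
  refine hb.map_lie_inl_inl_of_lab_eq hb' _ (hG.lab_eq x y hav hva)
    (hG.lab_eq y x (fun h => hva h.symm) (fun h => hav h.symm)) ?_
  rintro l (hl | hl)
  · exact edgeReversalEquiv_inr_of_ne b b' l₀ fun h => hav (hG.eq_of_lab_eq x y (h ▸ hl))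
  · exact edgeReversalEquiv_inr_of_ne b b' l₀ fun h => hva (hG.eq_of_lab_eq y x (h ▸ hl)).symm

theorem edgeReversalEquiv_lie_basis (hG : G'.IsUniqueEdgeReversal G a v l₀)
    (hb : IsGraphLieAlg G b) (hb' : IsGraphLieAlg G' b') (i j : V ⊕ C) :
    edgeReversalEquiv b b' l₀ ⁅b i, b j⁆ =
      ⁅edgeReversalEquiv b b' l₀ (b i), edgeReversalEquiv b b' l₀ (b j)⁆ := by
  rcases i with x | l
  · rcases j with y | m
    · rw [edgeReversalEquiv_inl, edgeReversalEquiv_inl]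
      exact edgeReversalEquiv_lie_inl_inl b b' l₀ hG hb hb' x y
    · rw [hb.lie_inr_right, map_zero, edgeReversalEquiv_apply_basis _ _ _ (.inr m),
        Units.smul_def, lie_smul, hb'.lie_inr_right, smul_zero]
  · rw [hb.lie_inr_left, map_zero, edgeReversalEquiv_apply_basis, Units.smul_def, smul_lie,
      hb'.lie_inr_left, smul_zero]

end EdgeReversal

theorem stmt7_general {V C F L L' : Type*} [Field F]
    [LieRing L] [LieAlgebra F L] [LieRing L'] [LieAlgebra F L']
    (G G' : LabeledDigraph V C) (a v : V) (l₀ : C)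
    (hedge : G.lab a v = some l₀)
    (huniq : ∀ x y : V, G.lab x y = some l₀ → x = a ∧ y = v)
    (hrev : G'.lab v a = some l₀)
    (hsame : ∀ x y : V, ¬(x = a ∧ y = v) → ¬(x = v ∧ y = a) → G'.lab x y = G.lab x y)
    (b : Module.Basis (V ⊕ C) F L) (hb : IsGraphLieAlg G b)
    (b' : Module.Basis (V ⊕ C) F L') (hb' : IsGraphLieAlg G' b') :
    Nonempty (L ≃ₗ⁅F⁆ L') := by
  classical
  let e := edgeReversalEquiv b b' l₀
  exact ⟨e.toLieEquiv (e.toLinearMap.map_lie_of_basis b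
    (edgeReversalEquiv_lie_basis b b' l₀ ⟨hedge, huniq, hrev, hsame⟩ hb hb'))⟩

/-- If `a → v` is a directed edge of `G` whose label occurs on no other edge, and `G'` is
obtained from `G` by reversing the direction of this edge (keeping its label and leaving
everything else unchanged), then `Lie(G)` and `Lie(G')` are isomorphic Lie algebras. -/
theorem stmt7 {V C F L L' : Type*} [Field F]
    [LieRing L] [LieAlgebra F L] [LieRing L'] [LieAlgebra F L']
    (hchar : (2 : F) ≠ 0)
    (G G' : LabeledDigraph V C) (a v : V) (l₀ : C)
    (hedge : G.lab a v = some l₀)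
    (huniq : ∀ x y : V, G.lab x y = some l₀ → x = a ∧ y = v)
    (hrev : G'.lab v a = some l₀) (hrev' : G'.lab a v = none)
    (hsame : ∀ x y : V, ¬(x = a ∧ y = v) → ¬(x = v ∧ y = a) → G'.lab x y = G.lab x y)
    (b : Module.Basis (V ⊕ C) F L) (hb : IsGraphLieAlg G b)
    (b' : Module.Basis (V ⊕ C) F L') (hb' : IsGraphLieAlg G' b') :
    Nonempty (L ≃ₗ⁅F⁆ L') :=
  stmt7_general G G' a v l₀ hedge huniq hrev hsame b hb b' hb'
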